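/- Let k be an algebraically closed field of characteristic zero, V a finite-dimensional k-vector space with dim V ≥ 2, and B : V × V → k a nondegenerate symmetric bilinear form. Let x : V → V be a linear endomorphism that is skew-adjoint (B(x u, v) = −B(u, x v) for all u, v) and nilpotent. Then there exists a nonzero vector v ∈ V with x v = 0 and B(v, v) = 0. -/

import Mathlib

/-!
If `x ≠ 0` has nilpotency class `m ≥ 2`, any nonzero `v = x ^ (m - 1) u` lies in the kernel
of `x`, and skew-adjointness gives `B v v = ± B u (x ^ (2m - 2) u) = 0`. If `x = 0`, any
isotropic vector will do: given `w` with `B w w ≠ 0` and `u ∉ k ∙ w`, the quadratic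
`c ↦ B (u + c • w) (u + c • w)` has a root over the algebraically closed field `k`.
-/

open Module Polynomial

namespace LinearMap

section AdjointPair

variable {R M M₂ : Type*}

theorem IsAdjointPair.pow [CommSemiring R] [AddCommMonoid M] [Module R M]
    [AddCommMonoid M₂] [Module R M₂] {B : M →ₗ[R] M →ₗ[R] M₂} {f g : End R M}
    (h : IsAdjointPair B B f g) (n : ℕ) : IsAdjointPair B B ⇑(f ^ n) ⇑(g ^ n) := by
  induction n with
  | zero => exact isAdjointPair_one
  | succ n ih => rw [pow_succ f, pow_succ' g]; exact ih.mul h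

variable [CommRing R] [AddCommGroup M] [Module R M] [AddCommGroup M₂] [Module R M₂]
  {B : M →ₗ[R] M →ₗ[R] M₂} {x : End R M}

theorem IsSkewAdjoint.apply_pow_apply_pow_eq_zero (hx : IsSkewAdjoint B x) {m n : ℕ}
    (hm : x ^ m = 0) (hn : m ≤ 2 * n) (u : M) : B ((x ^ n) u) ((x ^ n) u) = 0 := by
  have hxn : x ^ (n + n) = 0 := pow_eq_zero_of_le (by omega) hm
  rw [IsAdjointPair.pow (g := -x) hx n, ← End.mul_apply, neg_pow, mul_assoc, ← pow_add, hxn,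
    mul_zero, zero_apply, map_zero]

theorem IsSkewAdjoint.exists_ne_zero_apply_eq_zero_self_eq_zero (hx : IsSkewAdjoint B x)
    (hnil : IsNilpotent x) (hx0 : x ≠ 0) : ∃ v : M, v ≠ 0 ∧ x v = 0 ∧ B v v = 0 := by
  have : Nontrivial (End R M) := ⟨⟨x, 0, hx0⟩⟩
  set m := nilpotencyClass x
  have hm : 2 ≤ m := by
    have := pos_nilpotencyClass_iff.mpr hnil
    have : m ≠ 1 := fun h ↦ hx0 (eq_zero_of_nilpotencyClass_eq_one h)
    omega
  obtain ⟨u, hu⟩ : ∃ u, (x ^ (m - 1)) u ≠ 0 := by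
    by_contra! h
    exact pow_pred_nilpotencyClass hnil (LinearMap.ext h)
  refine ⟨(x ^ (m - 1)) u, hu, ?_,
    hx.apply_pow_apply_pow_eq_zero (pow_nilpotencyClass hnil) (by omega) u⟩
  rw [← End.mul_apply, ← pow_succ', Nat.sub_add_cancel (by omega), pow_nilpotencyClass hnil,
    zero_apply]

end AdjointPair

end LinearMap

theorem LinearMap.BilinForm.exists_ne_zero_self_eq_zero {k V : Type*} [Field k] [IsAlgClosed k]
    [AddCommGroup V] [Module k V] (hV : 2 ≤ finrank k V) (B : LinearMap.BilinForm k V) :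
    ∃ v : V, v ≠ 0 ∧ B v v = 0 := by
  have : Nontrivial V := Module.nontrivial_of_finrank_pos (R := k) (by omega)
  obtain ⟨w, hw⟩ := exists_ne (0 : V)
  by_cases hBw : B w w = 0
  · exact ⟨w, hw, hBw⟩
  obtain ⟨u, hu⟩ : ∃ u, u ∉ k ∙ w := by
    by_contra! h
    have := finrank_span_singleton (K := k) hw
    rw [Submodule.eq_top_iff'.mpr h, finrank_top] at this
    omega
  obtain ⟨c, hc⟩ := IsAlgClosed.exists_root
    (C (B w w) * X ^ 2 + C (B u w + B w u) * X + C (B u u)) (by rw [degree_quadratic hBw]; decide)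
  refine ⟨u + c • w, fun h ↦ hu ?_, ?_⟩
  · rw [add_eq_zero_iff_eq_neg.mp h]
    exact Submodule.neg_mem _ (Submodule.smul_mem _ c (Submodule.mem_span_singleton_self w))
  · simp only [IsRoot, eval_add, eval_mul, eval_pow, eval_C, eval_X] at hc
    simp only [map_add, map_smul, LinearMap.add_apply, LinearMap.smul_apply, smul_eq_mul]
    linear_combination hc

theorem statement3 (k V : Type*) [Field k] [IsAlgClosed k]
    [AddCommGroup V] [Module k V]
    (hV : 2 ≤ Module.finrank k V)
    (B : LinearMap.BilinForm k V)
    (x : Module.End k V)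
    (hskew : ∀ u v : V, B (x u) v = - B u (x v))
    (hnil : IsNilpotent x) :
    ∃ v : V, v ≠ 0 ∧ x v = 0 ∧ B v v = 0 := by
  by_cases hx : x = 0
  · obtain ⟨v, hv, hBv⟩ := B.exists_ne_zero_self_eq_zero hV
    exact ⟨v, hv, by simp [hx], hBv⟩
  · have hskew' : B.IsSkewAdjoint x := fun u v ↦ by simpa using hskew u v
    exact hskew'.exists_ne_zero_apply_eq_zero_self_eq_zero hnil hx
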